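/- For every integer n ≥ 1 and every real I ≥ 0, (2^{n/2}·Γ(n/2))^{−1}·∫_I^∞ x^{n/2 − 1}·e^{−x/2} dx ≤ e^{−I/2}·(I/2 + 9)^{(n+1)/2}. Equivalently, a chi-squared random variable with n degrees of freedom satisfies P(χ²_n ≥ I) ≤ e^{−I/2}·(I/2 + 9)^{(n+1)/2}. -/

import Mathlib

/-!
A Chernoff bound. For `x ≥ I` and `0 < b ≤ 1/2` one has
`e^{-x/2} ≤ e^{-(1/2 - b) I} e^{-b x}`, and `∫_0^∞ x^{a-1} e^{-b x} dx = Γ(a) b^{-a}`.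
Taking `b = 1/(2c)` with `c = I/2 + 9` bounds the tail by `e^{-I/2} e^{I/(2c)} c^{n/2}`,
and `e^{I/(2c)} < e < 3 ≤ √c`.
-/

open MeasureTheory Set Real

theorem integral_Ioi_rpow_mul_exp_neg_mul_le {a r b I : ℝ} (ha : 0 < a) (hb : 0 < b)
    (hbr : b ≤ r) (hI : 0 ≤ I) :
    ∫ x in Ioi I, x ^ (a - 1) * exp (-(r * x)) ≤
      exp (-((r - b) * I)) * ((1 / b) ^ a * Gamma a) := by
  have hint : IntegrableOn (fun x ↦ x ^ (a - 1) * exp (-(b * x))) (Ioi 0) := by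
    simpa [neg_mul] using
      integrableOn_rpow_mul_exp_neg_mul_rpow (by linarith : -1 < a - 1) one_pos hb
  calc ∫ x in Ioi I, x ^ (a - 1) * exp (-(r * x))
      ≤ ∫ x in Ioi I, exp (-((r - b) * I)) * (x ^ (a - 1) * exp (-(b * x))) := by
        refine integral_mono_of_nonneg ?_ ((hint.mono_set (Ioi_subset_Ioi hI)).const_mul _) ?_
        all_goals filter_upwards [self_mem_ae_restrict measurableSet_Ioi] with x (hx : I < x)
        · have : 0 ≤ x := by linarith
          positivity
        · have hexp : exp (-(r * x)) ≤ exp (-((r - b) * I)) * exp (-(b * x)) := by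
            rw [← exp_add, exp_le_exp]
            nlinarith
          calc x ^ (a - 1) * exp (-(r * x))
              ≤ x ^ (a - 1) * (exp (-((r - b) * I)) * exp (-(b * x))) :=
                mul_le_mul_of_nonneg_left hexp (rpow_nonneg (by linarith) _)
            _ = _ := by ring
    _ ≤ ∫ x in Ioi 0, exp (-((r - b) * I)) * (x ^ (a - 1) * exp (-(b * x))) := by
        refine setIntegral_mono_set (hint.const_mul _) ?_ (Ioi_subset_Ioi hI).eventuallyLE
        filter_upwards [self_mem_ae_restrict measurableSet_Ioi] with x (hx : 0 < x)
        positivity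
    _ = exp (-((r - b) * I)) * ((1 / b) ^ a * Gamma a) := by
        rw [integral_const_mul, integral_rpow_mul_exp_neg_mul_Ioi ha hb]

theorem chiSquared_tail_le {a c I : ℝ} (ha : 0 < a) (hc : 1 ≤ c) (hI : 0 ≤ I) :
    (2 ^ a * Gamma a)⁻¹ * ∫ x in Ioi I, x ^ (a - 1) * exp (-x / 2) ≤
      exp (-I / 2) * (exp (I / (2 * c)) * c ^ a) := by
  have hc0 : 0 < c := by linarith
  have hchernoff := integral_Ioi_rpow_mul_exp_neg_mul_le (r := 1 / 2) (b := 1 / (2 * c)) ha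
    (by positivity) (by field_simp; linarith) hI
  have hrate : ∀ x : ℝ, -x / 2 = -(1 / 2 * x) := fun x ↦ by ring
  have hexp : exp (-((1 / 2 - 1 / (2 * c)) * I)) = exp (-I / 2) * exp (I / (2 * c)) := by
    rw [← exp_add]; ring_nf
  have hpow : (1 / (1 / (2 * c))) ^ a = 2 ^ a * c ^ a := by
    rw [one_div_one_div, mul_rpow zero_le_two hc0.le]
  simp only [← hrate, hexp, hpow] at hchernoff
  have hΓ : 0 < 2 ^ a * Gamma a := by positivity [Gamma_pos_of_pos ha]
  rw [inv_mul_le_iff₀ hΓ]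
  exact hchernoff.trans_eq (by ring)

theorem chi_squared_tail_bound (n : ℕ) (hn : 1 ≤ n) (I : ℝ) (hI : 0 ≤ I) :
    (2 ^ ((n : ℝ) / 2) * Real.Gamma ((n : ℝ) / 2))⁻¹ *
        ∫ x in Set.Ioi I, x ^ ((n : ℝ) / 2 - 1) * Real.exp (-x / 2) ≤
      Real.exp (-I / 2) * (I / 2 + 9) ^ (((n : ℝ) + 1) / 2) := by
  have ha : 0 < (n : ℝ) / 2 := div_pos (by exact_mod_cast hn) two_pos
  have hc : (9 : ℝ) ≤ I / 2 + 9 := by linarith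
  have hexp : exp (I / (2 * (I / 2 + 9))) ≤ √(I / 2 + 9) :=
    calc exp (I / (2 * (I / 2 + 9))) ≤ exp 1 := exp_le_exp.mpr <| by
          rw [div_le_one (by positivity)]; linarith
      _ ≤ √9 := by
          rw [show (9 : ℝ) = 3 ^ 2 by norm_num, sqrt_sq zero_le_three]
          exact exp_one_lt_three.le
      _ ≤ √(I / 2 + 9) := sqrt_le_sqrt hc
  have hsplit :
      (I / 2 + 9) ^ (((n : ℝ) + 1) / 2) = √(I / 2 + 9) * (I / 2 + 9) ^ ((n : ℝ) / 2) := by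
    rw [sqrt_eq_rpow, ← rpow_add (by linarith)]
    ring_nf
  refine (chiSquared_tail_le (c := I / 2 + 9) ha (by linarith) hI).trans ?_
  rw [hsplit]
  gcongr
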